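/- arXiv:1707.09534 — 2 statements merged into one kernel-verified Lean document; each statement's English description precedes it below -/
import Mathlib

section
/- Let N ≥ 1 and let g be an invertible linear endomorphism of ℂ^{N+1}, inducing a map φ on the complex projective space ℙ^N(ℂ) (the projectivization of ℂ^{N+1}). Suppose ν is a nonzero finite Borel measure on ℙ^N(ℂ) which is invariant under φ (the pushforward of ν by φ equals ν) and which gives measure zero to every projective hyperplane, i.e. ν({[v] ∈ ℙ^N(ℂ) : ℓ(v) = 0}) = 0 for every nonzero linear functional ℓ : ℂ^{N+1} → ℂ. Then g is diagonalizable (semisimple), and all eigenvalues of g have the same absolute value. -/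
open MeasureTheory

/-- The quotient topology on the projectivization of a topological vector space. -/
noncomputable def projectivizationTopology (V : Type*) [AddCommGroup V] [Module ℂ V]
    [TopologicalSpace V] : TopologicalSpace (Projectivization ℂ V) :=
  instTopologicalSpaceQuotient

/-- The Borel σ-algebra on the projectivization. -/
noncomputable def projectivizationBorel (V : Type*) [AddCommGroup V] [Module ℂ V]
    [TopologicalSpace V] : MeasurableSpace (Projectivization ℂ V) :=
  @borel _ (projectivizationTopology V)

/-!
Normalise the powers `gⁿ` to operator norm one and extract a convergent subsequence
`s_k g^{n_k} → B ≠ 0`. If `B` were singular, then for `ν`-almost every line `[v]` (those with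
`Bv ≠ 0`) the lines `g^{n_k}[v]` would approach `[Bv]`, which lies in a hyperplane `ℓ = 0`
containing the image of `B`; by invariance of `ν` the whole mass of `ν` would sit on that
hyperplane. So `B` is injective. For an eigenvector `v` with eigenvalue `c` this makes
`|s_k| |c|^{n_k}` converge to a positive limit, which forces all eigenvalues to have the same
modulus, while a Jordan block `gv = cv + w`, `gw = cw` would add to `s_k g^{n_k} v` a component
of size about `n_k |s_k| |c|^{n_k} ‖w‖`, which is unbounded.
-/

open Filter Topology MeasureTheory

namespace Module.End

-- Multiplied through by `c`, so that no `c ^ (m - 1)` appears.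
theorem smul_pow_apply_of_apply_eq_smul_add {R M : Type*} [CommRing R] [AddCommGroup M]
    [Module R M] {A : End R M} {c : R} {v w : M}
    (hw : A w = c • w) (hv : A v = c • v + w) (m : ℕ) :
    c • (A ^ m) v = c ^ (m + 1) • v + ((m : R) * c ^ m) • w := by
  induction m with
  | zero => simp
  | succ m ih =>
    rw [pow_succ', mul_apply, ← map_smul, ih, map_add, map_smul, map_smul, hv, hw]
    push_cast
    module

theorem iSup_eigenspace_eq_top_of_ker_sq_le {K V : Type*} [Field K] [IsAlgClosed K]
    [AddCommGroup V] [Module K V] [FiniteDimensional K V] (A : End K V)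
    (h : ∀ c : K, LinearMap.ker ((A - c • 1) ^ 2) ≤ LinearMap.ker (A - c • 1)) :
    ⨆ c, A.eigenspace c = ⊤ := by
  rw [eq_top_iff, ← iSup_maxGenEigenspace_eq_top]
  refine iSup_mono fun c x hx => ?_
  obtain ⟨k, hk⟩ := (mem_maxGenEigenspace A c x).mp hx
  have hker := ker_pow_constant (f := A - c • 1) (k := 1)
    (le_antisymm (LinearMap.ker_le_ker_comp _ _) (by simpa using h c)) k
  have hx1 : x ∈ LinearMap.ker ((A - c • 1) ^ (1 + k)) := by
    rw [add_comm, pow_succ', LinearMap.mem_ker, mul_apply, hk, map_zero]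
  rw [← hker, pow_one, LinearMap.mem_ker, LinearMap.sub_apply, sub_eq_zero] at hx1
  exact mem_eigenspace_iff.mpr hx1

section Asymptotics

variable {𝕜 V : Type*} [RCLike 𝕜] [NormedAddCommGroup V] [NormedSpace 𝕜 V]
  {A B : End 𝕜 V} {s : ℕ → 𝕜} {n : ℕ → ℕ}

theorem exists_tendsto_smul_pow_apply [FiniteDimensional 𝕜 V] [Nontrivial V]
    (hA : Function.Injective A) :
    ∃ (s : ℕ → 𝕜) (n : ℕ → ℕ) (B : End 𝕜 V), B ≠ 0 ∧ Tendsto n atTop atTop ∧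
      (∀ k, s k ≠ 0) ∧ ∀ v, Tendsto (fun k => s k • (A ^ n k) v) atTop (𝓝 (B v)) := by
  set A' := LinearMap.toContinuousLinearMap A
  have hpow : ∀ m v, (A' ^ m) v = (A ^ m) v := fun m v => by
    rw [← ContinuousLinearMap.coe_coe, ContinuousLinearMap.toLinearMap_pow,
      LinearMap.coe_toContinuousLinearMap]
  have hA'pow : ∀ m, A' ^ m ≠ 0 := fun m h => by
    obtain ⟨v, hv⟩ := exists_ne (0 : V)
    have hAm : Function.Injective (A ^ m) := coe_pow A m ▸ hA.iterate m
    exact (map_ne_zero_iff _ hAm).mpr hv (by rw [← hpow, h, _root_.zero_apply])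
  have := FiniteDimensional.proper_rclike 𝕜 (V →L[𝕜] V)
  obtain ⟨B, hB, σ, hσ, hlim⟩ := (isCompact_sphere (0 : V →L[𝕜] V) 1).tendsto_subseq
    (x := fun m => ((‖A' ^ m‖ : 𝕜))⁻¹ • A' ^ m)
    fun m => mem_sphere_zero_iff_norm.mpr (norm_smul_inv_norm (hA'pow m))
  refine ⟨fun k => ((‖A' ^ σ k‖ : 𝕜))⁻¹, σ, B, fun h => ?_, hσ.tendsto_atTop,
    fun k => inv_ne_zero (RCLike.ofReal_ne_zero.mpr (norm_ne_zero_iff.mpr (hA'pow _))),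
    fun v => ?_⟩
  · rw [mem_sphere_zero_iff_norm,
      ContinuousLinearMap.coe_injective (h.trans ContinuousLinearMap.toLinearMap_zero.symm),
      norm_zero] at hB
    exact zero_ne_one hB
  · simpa [Function.comp_def, hpow] using
      ((ContinuousLinearMap.apply 𝕜 V v).continuous.tendsto B).comp hlim

theorem tendsto_norm_mul_pow_of_hasEigenvector
    (hB : ∀ v, Tendsto (fun k => s k • (A ^ n k) v) atTop (𝓝 (B v)))
    {c : 𝕜} {v : V} (hv : A.HasEigenvector c v) :
    Tendsto (fun k => ‖s k * c ^ n k‖) atTop (𝓝 (‖B v‖ / ‖v‖)) := by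
  have hv0 : ‖v‖ ≠ 0 := norm_ne_zero_iff.mpr hv.2
  simpa only [hv.pow_apply, smul_smul, norm_smul, mul_div_cancel_right₀ _ hv0] using
    (hB v).norm.div_const ‖v‖

theorem norm_le_of_hasEigenvector_of_tendsto_smul_pow
    (hB : ∀ v, Tendsto (fun k => s k • (A ^ n k) v) atTop (𝓝 (B v)))
    (hn : Tendsto n atTop atTop) {c₁ c₂ : 𝕜} {v₁ v₂ : V}
    (h₁ : A.HasEigenvector c₁ v₁) (hB₁ : B v₁ ≠ 0) (h₂ : A.HasEigenvector c₂ v₂) :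
    ‖c₂‖ ≤ ‖c₁‖ := by
  by_contra! hlt
  have hc₂ : 0 < ‖c₂‖ := (norm_nonneg c₁).trans_lt hlt
  have hratio : Tendsto (fun k => (‖c₁‖ / ‖c₂‖) ^ n k) atTop (𝓝 0) :=
    (tendsto_pow_atTop_nhds_zero_of_lt_one (by positivity) ((div_lt_one hc₂).mpr hlt)).comp hn
  have hlim := hratio.mul (tendsto_norm_mul_pow_of_hasEigenvector hB h₂)
  have heq : (fun k => (‖c₁‖ / ‖c₂‖) ^ n k * ‖s k * c₂ ^ n k‖) =
      fun k => ‖s k * c₁ ^ n k‖ := by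
    ext k
    rw [norm_mul, norm_mul, norm_pow, norm_pow, div_pow]
    field_simp
  rw [heq, zero_mul] at hlim
  exact div_ne_zero (norm_ne_zero_iff.mpr hB₁) (norm_ne_zero_iff.mpr h₁.2)
    (tendsto_nhds_unique (tendsto_norm_mul_pow_of_hasEigenvector hB h₁) hlim)

theorem apply_eq_zero_of_apply_eq_smul_add
    (hB : ∀ v, Tendsto (fun k => s k • (A ^ n k) v) atTop (𝓝 (B v)))
    (hn : Tendsto n atTop atTop) {c : 𝕜} {v w : V} (hw : A w = c • w) (hv : A v = c • v + w) :
    B w = 0 := by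
  by_contra hBw
  have hw0 : w ≠ 0 := fun h => hBw (h ▸ map_zero B)
  set t := fun k => ‖s k * c ^ n k‖
  have ht : Tendsto t atTop (𝓝 (‖B w‖ / ‖w‖)) := tendsto_norm_mul_pow_of_hasEigenvector hB
    (hasEigenvector_iff.mpr ⟨mem_eigenspace_iff.mpr hw, hw0⟩)
  have hL : 0 < ‖B w‖ / ‖w‖ := div_pos (norm_pos_iff.mpr hBw) (norm_pos_iff.mpr hw0)
  have hgrow : Tendsto (fun k => (n k : ℝ) * t k * ‖w‖) atTop atTop :=
    ((tendsto_natCast_atTop_atTop.comp hn).atTop_mul_pos hL ht).atTop_mul_const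
      (norm_pos_iff.mpr hw0)
  have hbound : Tendsto (fun k => ‖c‖ * ‖s k • (A ^ n k) v‖ + t k * ‖c • v‖) atTop
      (𝓝 (‖c‖ * ‖B v‖ + ‖B w‖ / ‖w‖ * ‖c • v‖)) :=
    ((hB v).norm.const_mul _).add (ht.mul_const _)
  refine not_tendsto_atTop_of_tendsto_nhds hbound (tendsto_atTop_mono (fun k => ?_) hgrow)
  have hchain : ((n k : 𝕜) * (s k * c ^ n k)) • w =
      s k • c • (A ^ n k) v - (s k * c ^ n k) • c • v := by
    rw [smul_pow_apply_of_apply_eq_smul_add hw hv]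
    module
  calc (n k : ℝ) * t k * ‖w‖ = ‖((n k : 𝕜) * (s k * c ^ n k)) • w‖ := by
        rw [norm_smul, norm_mul, RCLike.norm_natCast]
    _ ≤ ‖s k • c • (A ^ n k) v‖ + ‖(s k * c ^ n k) • c • v‖ := hchain ▸ norm_sub_le _ _
    _ = ‖c‖ * ‖s k • (A ^ n k) v‖ + t k * ‖c • v‖ := by
        rw [smul_comm, norm_smul c, norm_smul (s k * _)]

theorem iSup_eigenspace_eq_top_of_tendsto_smul_pow [IsAlgClosed 𝕜] [FiniteDimensional 𝕜 V]
    (hB : ∀ v, Tendsto (fun k => s k • (A ^ n k) v) atTop (𝓝 (B v)))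
    (hn : Tendsto n atTop atTop) (hBinj : Function.Injective B) :
    ⨆ c, A.eigenspace c = ⊤ :=
  iSup_eigenspace_eq_top_of_ker_sq_le A fun c x hx => by
    set w := (A - c • 1) x
    have hw : A w = c • w := by
      rwa [LinearMap.mem_ker, sq, mul_apply, LinearMap.sub_apply, sub_eq_zero] at hx
    have hv : A x = c • x + w := by simp [w]
    exact LinearMap.mem_ker.mpr
      (hBinj (by rw [apply_eq_zero_of_apply_eq_smul_add hB hn hw hv, map_zero]))

theorem norm_eq_of_hasEigenvalue_of_tendsto_smul_pow
    (hB : ∀ v, Tendsto (fun k => s k • (A ^ n k) v) atTop (𝓝 (B v)))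
    (hn : Tendsto n atTop atTop) (hBinj : Function.Injective B) {c₁ c₂ : 𝕜}
    (h₁ : A.HasEigenvalue c₁) (h₂ : A.HasEigenvalue c₂) : ‖c₁‖ = ‖c₂‖ := by
  obtain ⟨v₁, hv₁⟩ := h₁.exists_hasEigenvector
  obtain ⟨v₂, hv₂⟩ := h₂.exists_hasEigenvector
  have hBv {c : 𝕜} {v : V} (hv : A.HasEigenvector c v) : B v ≠ 0 :=
    (map_ne_zero_iff B hBinj).mpr hv.2
  exact le_antisymm (norm_le_of_hasEigenvector_of_tendsto_smul_pow hB hn hv₂ (hBv hv₂) hv₁)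
    (norm_le_of_hasEigenvector_of_tendsto_smul_pow hB hn hv₁ (hBv hv₁) hv₂)

end Asymptotics

end Module.End

theorem MeasureTheory.measure_compl_eq_zero_of_ae_eventually_mem {α β ι : Type*}
    [MeasurableSpace α] [MeasurableSpace β] {μ : Measure α} {ν : Measure β} [IsFiniteMeasure μ]
    {l : Filter ι} [l.IsCountablyGenerated] [l.NeBot] {f : ι → α → β}
    (hf : ∀ i, MeasurePreserving (f i) μ ν) {U : Set β} (hU : MeasurableSet U)
    (h : ∀ᵐ x ∂μ, ∀ᶠ i in l, f i x ∈ U) : ν Uᶜ = 0 := by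
  have hlim : Tendsto (fun i => μ (f i ⁻¹' Uᶜ)) l (𝓝 (μ ∅)) :=
    tendsto_measure_of_ae_tendsto_indicator_of_isFiniteMeasure l MeasurableSet.empty
      (fun i => (hf i).measurable hU.compl) (h.mono fun x hx => hx.mono fun i hi => by simp [hi])
  simp only [fun i => (hf i).measure_preimage hU.compl.nullMeasurableSet, measure_empty] at hlim
  exact tendsto_nhds_unique tendsto_const_nhds hlim

open scoped LinearAlgebra.Projectivization

section

attribute [local instance] projectivizationTopology projectivizationBorel

namespace Projectivization

variable {V : Type*} [NormedAddCommGroup V] [NormedSpace ℂ V]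

theorem borelSpace : BorelSpace (ℙ ℂ V) := ⟨rfl⟩

attribute [local instance] borelSpace

theorem continuous_of_continuous_mk' {X : Type*} [TopologicalSpace X] {f : ℙ ℂ V → X}
    (hf : Continuous (f ∘ mk' ℂ)) : Continuous f :=
  isQuotientMap_quotient_mk'.continuous_iff.mpr hf

theorem measurable_smul [FiniteDimensional ℂ V] (g : V ≃ₗ[ℂ] V) :
    Measurable (g • · : ℙ ℂ V → ℙ ℂ V) := by
  refine Continuous.measurable (continuous_of_continuous_mk' ?_)
  exact continuous_quotient_mk'.comp
    ((g.toLinearMap.continuous_of_finiteDimensional.comp continuous_subtype_val).subtype_mk _)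

theorem norm_apply_smul_div_norm_smul (ℓ : V →ₗ[ℂ] ℂ) {t : ℂ} (ht : t ≠ 0) (v : V) :
    ‖ℓ (t • v)‖ / ‖t • v‖ = ‖ℓ v‖ / ‖v‖ := by
  rw [map_smul, norm_smul, norm_smul, mul_div_mul_left _ _ (norm_ne_zero_iff.mpr ht)]

noncomputable def normRatio (ℓ : V →ₗ[ℂ] ℂ) : ℙ ℂ V → ℝ :=
  Projectivization.lift (fun v => ‖ℓ v‖ / ‖(v : V)‖) fun a b t hab => by
    have ht : t ≠ 0 := by rintro rfl; exact a.2 (by simp [hab])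
    rw [hab, norm_apply_smul_div_norm_smul ℓ ht]

variable (ℓ : V →ₗ[ℂ] ℂ)

theorem normRatio_eq (x : ℙ ℂ V) : normRatio ℓ x = ‖ℓ x.rep‖ / ‖x.rep‖ := by
  conv_lhs => rw [← mk_rep x]
  rfl

theorem normRatio_smul (g : V ≃ₗ[ℂ] V) (x : ℙ ℂ V) :
    normRatio ℓ (g • x) = ‖ℓ (g x.rep)‖ / ‖g x.rep‖ := by
  conv_lhs => rw [← mk_rep x]
  rfl

theorem continuous_normRatio [FiniteDimensional ℂ V] : Continuous (normRatio ℓ) :=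
  continuous_of_continuous_mk' <|
    (((ℓ.continuous_of_finiteDimensional).comp continuous_subtype_val).norm.div
      continuous_subtype_val.norm fun v : {v : V // v ≠ 0} => norm_ne_zero_iff.mpr v.2 :)

variable [FiniteDimensional ℂ V] {ν : Measure (ℙ ℂ V)} [IsFiniteMeasure ν] {g : V ≃ₗ[ℂ] V}
  {s : ℕ → ℂ} {n : ℕ → ℕ} {B : V →ₗ[ℂ] V}

theorem measure_setOf_apply_rep_ne_zero_eq_zero (hg : Measure.map (g • ·) ν = ν)
    (hs : ∀ k, s k ≠ 0) (hB : ∀ v, Tendsto (fun k => s k • (g ^ n k) v) atTop (𝓝 (B v)))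
    (hBν : ν {x | B x.rep = 0} = 0) {ℓ : V →ₗ[ℂ] ℂ} (hℓB : ∀ v, ℓ (B v) = 0) :
    ν {x | ℓ x.rep ≠ 0} = 0 := by
  have hg' : MeasurePreserving (g • ·) ν ν := ⟨measurable_smul g, hg⟩
  have hconv : ∀ x : ℙ ℂ V, B x.rep ≠ 0 →
      Tendsto (fun k => normRatio ℓ ((g ^ n k) • x)) atTop (𝓝 0) := fun x hx => by
    have hlim := ((ℓ.continuous_of_finiteDimensional.tendsto _).comp (hB x.rep)).norm.div
      (hB x.rep).norm (norm_ne_zero_iff.mpr hx)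
    rw [hℓB, norm_zero, zero_div] at hlim
    refine hlim.congr fun k => ?_
    rw [normRatio_smul, ← norm_apply_smul_div_norm_smul ℓ (hs k)]
    rfl
  have hae : ∀ᵐ x ∂ν, Tendsto (fun k => normRatio ℓ ((g ^ n k) • x)) atTop (𝓝 0) :=
    measure_mono_null (fun x hx => by_contra fun h => hx (hconv x h)) hBν
  have hsmall : ∀ j : ℕ, ν {x | normRatio ℓ x < 1 / (j + 1)}ᶜ = 0 := fun j =>
    measure_compl_eq_zero_of_ae_eventually_mem
      (fun k => by simpa only [smul_iterate] using hg'.iterate (n k))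
      (measurableSet_lt (continuous_normRatio ℓ).measurable measurable_const)
      (hae.mono fun x hx => hx.eventually (gt_mem_nhds (by positivity)))
  refine measure_mono_null (fun x hx => ?_) (measure_iUnion_null hsmall)
  have hpos : 0 < normRatio ℓ x := by
    rw [normRatio_eq]
    exact div_pos (norm_pos_iff.mpr hx) (norm_pos_iff.mpr x.rep_nonzero)
  obtain ⟨j, hj⟩ := exists_nat_one_div_lt hpos
  exact Set.mem_iUnion.mpr ⟨j, not_lt.mpr hj.le⟩

theorem injective_of_tendsto_smul_pow (hν : ν ≠ 0)
    (hν_hyperplane : ∀ ℓ : V →ₗ[ℂ] ℂ, ℓ ≠ 0 → ν {x | ℓ x.rep = 0} = 0)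
    (hg : Measure.map (g • ·) ν = ν) (hs : ∀ k, s k ≠ 0)
    (hB : ∀ v, Tendsto (fun k => s k • (g ^ n k) v) atTop (𝓝 (B v))) (hB0 : B ≠ 0) :
    Function.Injective B := by
  by_contra hinj
  obtain ⟨ℓ, hℓ, hrange⟩ := (LinearMap.range B).exists_le_ker_of_lt_top <| lt_top_iff_ne_top.mpr
    fun h => hinj (LinearMap.injective_iff_surjective.mpr (LinearMap.range_eq_top.mp h))
  obtain ⟨ℓ', hℓ', hker⟩ := (LinearMap.ker B).exists_le_ker_of_lt_top <| lt_top_iff_ne_top.mpr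
    fun h => hB0 (LinearMap.ker_eq_top.mp h)
  have hBν : ν {x | B x.rep = 0} = 0 :=
    measure_mono_null (fun x hx => hker hx) (hν_hyperplane ℓ' hℓ')
  have hℓν := measure_setOf_apply_rep_ne_zero_eq_zero hg hs hB hBν (ℓ := ℓ)
    fun v => hrange ⟨v, rfl⟩
  exact hν <| Measure.measure_univ_eq_zero.mp <|
    measure_mono_null (fun x _ => em (ℓ x.rep = 0)) (measure_union_null (hν_hyperplane ℓ hℓ) hℓν)

end Projectivization

end

theorem stmt_7_general (N : ℕ)
    (g : (Fin (N + 1) → ℂ) ≃ₗ[ℂ] (Fin (N + 1) → ℂ)) :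
    letI : MeasurableSpace (Projectivization ℂ (Fin (N + 1) → ℂ)) :=
      projectivizationBorel (Fin (N + 1) → ℂ)
    ∀ ν : Measure (Projectivization ℂ (Fin (N + 1) → ℂ)),
      IsFiniteMeasure ν → ν ≠ 0 →
      Measure.map
        (Projectivization.map ((g : (Fin (N + 1) → ℂ) →ₗ[ℂ] (Fin (N + 1) → ℂ)))
          g.injective) ν = ν →
      (∀ ℓ : (Fin (N + 1) → ℂ) →ₗ[ℂ] ℂ, ℓ ≠ 0 →
        ν {x : Projectivization ℂ (Fin (N + 1) → ℂ) | ℓ x.rep = 0} = 0) →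
      (⨆ c : ℂ,
        Module.End.eigenspace (g : (Fin (N + 1) → ℂ) →ₗ[ℂ] (Fin (N + 1) → ℂ)) c) = ⊤ ∧
      ∀ c₁ c₂ : ℂ,
        Module.End.HasEigenvalue (g : (Fin (N + 1) → ℂ) →ₗ[ℂ] (Fin (N + 1) → ℂ)) c₁ →
        Module.End.HasEigenvalue (g : (Fin (N + 1) → ℂ) →ₗ[ℂ] (Fin (N + 1) → ℂ)) c₂ →
        ‖c₁‖ = ‖c₂‖ := by
  intro ν _ hν hinv hν_hyperplane
  obtain ⟨s, n, B, hB0, hn, hs, hB⟩ := Module.End.exists_tendsto_smul_pow_apply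
    (A := (g : Module.End ℂ (Fin (N + 1) → ℂ))) g.injective
  have hBg : ∀ v, Tendsto (fun k => s k • (g ^ n k) v) atTop (𝓝 (B v)) := by
    simpa only [LinearEquiv.pow_apply, Module.End.pow_apply, LinearEquiv.coe_coe] using hB
  have hBinj := Projectivization.injective_of_tendsto_smul_pow hν hν_hyperplane hinv hs hBg hB0
  exact ⟨Module.End.iSup_eigenspace_eq_top_of_tendsto_smul_pow hB hn hBinj,
    fun _ _ => Module.End.norm_eq_of_hasEigenvalue_of_tendsto_smul_pow hB hn hBinj⟩

/-- Let `g` be an invertible linear endomorphism of `ℂ^{N+1}` (`N ≥ 1`), inducing a map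
`φ` on `ℙ^N(ℂ)`. If some nonzero finite Borel measure `ν` on `ℙ^N(ℂ)` is `φ`-invariant
and gives measure zero to every projective hyperplane, then `g` is diagonalizable and
all of its eigenvalues have the same absolute value. -/
theorem stmt_7 (N : ℕ) (hN : 1 ≤ N)
    (g : (Fin (N + 1) → ℂ) ≃ₗ[ℂ] (Fin (N + 1) → ℂ)) :
    letI : MeasurableSpace (Projectivization ℂ (Fin (N + 1) → ℂ)) :=
      projectivizationBorel (Fin (N + 1) → ℂ)
    ∀ ν : Measure (Projectivization ℂ (Fin (N + 1) → ℂ)),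
      IsFiniteMeasure ν → ν ≠ 0 →
      Measure.map
        (Projectivization.map ((g : (Fin (N + 1) → ℂ) →ₗ[ℂ] (Fin (N + 1) → ℂ)))
          g.injective) ν = ν →
      (∀ ℓ : (Fin (N + 1) → ℂ) →ₗ[ℂ] ℂ, ℓ ≠ 0 →
        ν {x : Projectivization ℂ (Fin (N + 1) → ℂ) | ℓ x.rep = 0} = 0) →
      (⨆ c : ℂ,
        Module.End.eigenspace (g : (Fin (N + 1) → ℂ) →ₗ[ℂ] (Fin (N + 1) → ℂ)) c) = ⊤ ∧
      ∀ c₁ c₂ : ℂ,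
        Module.End.HasEigenvalue (g : (Fin (N + 1) → ℂ) →ₗ[ℂ] (Fin (N + 1) → ℂ)) c₁ →
        Module.End.HasEigenvalue (g : (Fin (N + 1) → ℂ) →ₗ[ℂ] (Fin (N + 1) → ℂ)) c₂ →
        ‖c₁‖ = ‖c₂‖ :=
  stmt_7_general N g
end

section
/- Let K be a field of characteristic zero equipped with a multiplicative norm ‖·‖ (‖xy‖ = ‖x‖·‖y‖, ‖x‖ = 0 iff x = 0, triangle inequality) which is nontrivial (there exists x ∈ K with ‖x‖ ≠ 0 and ‖x‖ ≠ 1), and suppose K is locally compact in the topology induced by this norm. Then exactly one of the following holds: (a) there is a ring isomorphism K ≅ ℝ; (b) there is a ring isomorphism K ≅ ℂ; or (c) there exist a prime number p and a ring homomorphism ι : ℚ_p → K making K a finite-dimensional ℚ_p-vector space. -/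
/-!
The norm of `K` restricted to `ℚ` is nontrivial, since otherwise the natural numbers would form an
infinite discrete subset of the compact unit ball. By Ostrowski's theorem it is then equivalent to
the real or to a `p`-adic absolute value, so the inclusion `ℚ → K` extends by completeness to a
continuous embedding of `ℝ` or `ℚ_p` into `K`, over which `K` is finite-dimensional by Riesz's
theorem; and a finite extension of `ℝ` is `ℝ` or `ℂ`.

The three cases exclude each other: `ℂ` and `ℚ_p` contain square roots of negative integers
(`i`, and `√(1 - 8p)` by Hensel's lemma), which `ℝ` does not, and `ℚ_p` has irreducible
polynomials `X ^ q - p` of every prime degree `q`, so no finite extension of it is algebraically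
closed.
-/

open Polynomial

lemma isEmpty_ringHom_real_of_sq_eq_neg {R : Type*} [Ring R] {x : R} {m : ℤ} (hm : m < 0)
    (hx : x ^ 2 = m) : IsEmpty (R →+* ℝ) := by
  refine ⟨fun f => ?_⟩
  have hfx : f x ^ 2 = m := by simpa using congrArg f hx
  have : (m : ℝ) < 0 := by exact_mod_cast hm
  nlinarith [sq_nonneg (f x)]

lemma Complex.isEmpty_ringHom_real : IsEmpty (ℂ →+* ℝ) :=
  isEmpty_ringHom_real_of_sq_eq_neg (x := I) (m := -1) (by norm_num) (by simp)

lemma PadicInt.exists_sq_eq_one_sub_eight_mul (p : ℕ) [Fact p.Prime] :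
    ∃ z : ℤ_[p], z ^ 2 = 1 - 8 * p := by
  set F : Polynomial ℤ_[p] := X ^ 2 - C (1 - 8 * (p : ℤ_[p]))
  have hF : F.aeval (1 : ℤ_[p]) = 2 ^ 3 * p := by norm_num [F]
  have hF' : F.derivative.aeval (1 : ℤ_[p]) = 2 := by norm_num [F]
  have h2 : 0 < ‖(2 : ℤ_[p])‖ := norm_pos_iff.mpr two_ne_zero
  have hp : ‖(p : ℤ_[p])‖ < 1 := by
    rw [PadicInt.norm_p]
    exact inv_lt_one_of_one_lt₀ (by exact_mod_cast (Fact.out : p.Prime).one_lt)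
  -- the factor `8` makes Hensel's condition hold for `p = 2` too: `‖8p‖ = ‖2‖³‖p‖ < ‖2‖²`
  have hnorm : ‖F.aeval (1 : ℤ_[p])‖ < ‖F.derivative.aeval (1 : ℤ_[p])‖ ^ 2 := by
    rw [hF, hF', norm_mul, norm_pow]
    nlinarith [PadicInt.norm_le_one (2 : ℤ_[p]), mul_pos (pow_pos h2 2) h2, norm_nonneg (p : ℤ_[p])]
  obtain ⟨z, hz, -⟩ := hensels_lemma hnorm
  exact ⟨z, by simpa [F, sub_eq_zero] using hz⟩

lemma Padic.isEmpty_ringHom_real (p : ℕ) [Fact p.Prime] : IsEmpty (ℚ_[p] →+* ℝ) := by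
  obtain ⟨z, hz⟩ := PadicInt.exists_sq_eq_one_sub_eight_mul p
  have hneg : (1 - 8 * p : ℤ) < 0 := by linarith [(Fact.out : p.Prime).two_le]
  have := isEmpty_ringHom_real_of_sq_eq_neg hneg (x := z) (by push_cast; exact hz)
  exact ⟨fun f => this.false (f.comp PadicInt.Coe.ringHom)⟩

lemma Padic.irreducible_X_pow_sub_C_p {p q : ℕ} [Fact p.Prime] (hq : q.Prime) :
    Irreducible (X ^ q - C (p : ℚ_[p])) := by
  refine X_pow_sub_C_irreducible_of_prime hq fun b hb => hq.one_lt.ne' ?_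
  have hv := congrArg Padic.valuation hb
  rw [Padic.valuation_pow, Padic.valuation_p] at hv
  exact_mod_cast Int.eq_one_of_mul_eq_one_right (by positivity) hv

lemma Padic.not_finite_of_isAlgClosed (p : ℕ) [Fact p.Prime] (F : Type*) [Field F]
    [IsAlgClosed F] [Algebra ℚ_[p] F] : ¬ Module.Finite ℚ_[p] F := by
  intro hfin
  obtain ⟨q, hq_gt, hq⟩ := Nat.exists_infinite_primes (Module.finrank ℚ_[p] F + 1)
  obtain ⟨z, hz⟩ := IsAlgClosed.exists_aeval_eq_zero F (X ^ q - C (p : ℚ_[p]))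
    (by rw [degree_X_pow_sub_C hq.pos]; exact_mod_cast hq.ne_zero)
  have hmin : minpoly ℚ_[p] z = X ^ q - C (p : ℚ_[p]) :=
    (minpoly.eq_of_irreducible_of_monic (irreducible_X_pow_sub_C_p hq) hz
      (monic_X_pow_sub_C _ hq.ne_zero)).symm
  have hdeg := minpoly.natDegree_le (A := ℚ_[p]) z
  rw [hmin, natDegree_X_pow_sub_C] at hdeg
  omega

noncomputable def normComap {F K : Type*} [Field F] [NormedField K] (i : F →+* K) :
    AbsoluteValue F ℝ :=
  (NormedField.toAbsoluteValue K).comp i.injective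

@[simp]
lemma normComap_apply {F K : Type*} [Field F] [NormedField K] (i : F →+* K) (x : F) :
    normComap i x = ‖i x‖ := rfl

theorem exists_continuous_ringHom_of_isEquiv {F L K : Type*} [Field F] [NormedField L]
    [NormedField K] [CompleteSpace K] {i : F →+* L} (hi : DenseRange i) (j : F →+* K)
    (h : (normComap i).IsEquiv (normComap j)) : ∃ ι : L →+* K, Continuous ι := by
  set v := normComap i
  set w := normComap j
  -- On `WithAbs v`, `i` is a dense isometric embedding, and `j` is uniformly continuous because
  -- the identity `WithAbs v → WithAbs w` is a homeomorphism for equivalent `v` and `w`.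
  let i' : WithAbs v →+* L := i.comp (WithAbs.equiv v)
  let jw : WithAbs w →+* K := j.comp (WithAbs.equiv w)
  let j' : WithAbs v →+* K := jw.comp (WithAbs.congr v w (.refl F))
  have hi' : Isometry i' := AddMonoidHomClass.isometry_of_norm i' fun _ => rfl
  have hdense : DenseRange i' := by
    simpa [DenseRange, i', (WithAbs.equiv v).surjective.range_comp] using hi
  have hj' : UniformContinuous j' := uniformContinuous_addMonoidHom_of_continuous <|
    (AddMonoidHomClass.isometry_of_norm jw fun _ => rfl).continuous.comp
      ((AbsoluteValue.isEquiv_iff_isHomeomorph v w).mp h).continuous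
  exact ⟨IsDenseInducing.extendRingHom hi'.isUniformInducing hdense hj',
    (uniformContinuous_uniformly_extend hi'.isUniformInducing hdense hj').continuous⟩

theorem finiteDimensional_of_continuous_ringHom {L K : Type*} [NontriviallyNormedField L]
    [CompleteSpace L] [Field K] [TopologicalSpace K] [IsTopologicalRing K] [T2Space K]
    [WeaklyLocallyCompactSpace K] (ι : L →+* K) (hι : Continuous ι) :
    letI := ι.toAlgebra
    FiniteDimensional L K := by
  let := ι.toAlgebra
  have : ContinuousSMul L K := continuousSMul_of_algebraMap L K hι
  exact .of_locallyCompactSpace L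

theorem isNontrivial_normComap_ratCast {K : Type*} [NormedField K] [CharZero K] [ProperSpace K] :
    (normComap (Rat.castHom K)).IsNontrivial := by
  by_contra! htriv
  have hnorm : ∀ q : ℚ, q ≠ 0 → ‖(q : K)‖ = 1 := fun q hq => by
    by_contra hne; exact htriv ⟨q, hq, hne⟩
  have hemb : Topology.IsClosedEmbedding (Nat.cast : ℕ → K) :=
    Metric.isClosedEmbedding_of_pairwise_le_dist one_pos fun m n hmn => by
      have hq : (m - n : ℚ) ≠ 0 := sub_ne_zero.mpr (by exact_mod_cast hmn)
      simpa [dist_eq_norm] using (hnorm _ hq).ge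
  have hball : Nat.cast ⁻¹' Metric.closedBall (0 : K) 1 = Set.univ := by
    ext n
    rcases eq_or_ne n 0 with rfl | hn
    · simp
    · simpa using (hnorm n (by exact_mod_cast hn)).le
  have hcpt := hemb.isCompact_preimage (isCompact_closedBall (0 : K) 1)
  rw [hball] at hcpt
  exact Set.infinite_univ hcpt.finite_of_discrete

lemma normComap_ratCast_real : normComap (Rat.castHom ℝ) = Rat.AbsoluteValue.real := by
  ext q; simp [Real.norm_eq_abs, -Rat.norm_cast_real]

lemma normComap_ratCast_padic (p : ℕ) [Fact p.Prime] :
    normComap (Rat.castHom ℚ_[p]) = Rat.AbsoluteValue.padic p := by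
  ext q; simp [Padic.eq_padicNorm]

def IsPadicField (K : Type*) [Field K] : Prop :=
  ∃ (p : ℕ) (hp : p.Prime),
    letI : Fact p.Prime := ⟨hp⟩
    ∃ ι : ℚ_[p] →+* K,
      letI : Algebra ℚ_[p] K := ι.toAlgebra
      FiniteDimensional ℚ_[p] K

theorem nonempty_ringEquiv_real_or_complex_or_isPadicField (K : Type*) [NormedField K]
    [CharZero K] [ProperSpace K] :
    Nonempty (K ≃+* ℝ) ∨ Nonempty (K ≃+* ℂ) ∨ IsPadicField K := by
  rcases Rat.AbsoluteValue.equiv_real_or_padic _ (isNontrivial_normComap_ratCast (K := K))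
    with h | ⟨p, ⟨hp, h⟩, -⟩
  · obtain ⟨ι, hι⟩ := exists_continuous_ringHom_of_isEquiv Rat.denseRange_cast (Rat.castHom K)
      (normComap_ratCast_real ▸ h.symm)
    let := ι.toAlgebra
    have := finiteDimensional_of_continuous_ringHom ι hι
    have := Algebra.IsAlgebraic.of_finite ℝ K
    exact (Real.nonempty_algEquiv_or K).imp (.map AlgEquiv.toRingEquiv)
      fun h => .inl (h.map AlgEquiv.toRingEquiv)
  · obtain ⟨ι, hι⟩ := exists_continuous_ringHom_of_isEquiv (Padic.denseRange_ratCast p)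
      (Rat.castHom K) (normComap_ratCast_padic p ▸ h.symm)
    exact .inr (.inr ⟨p, hp.out, ι, finiteDimensional_of_continuous_ringHom ι hι⟩)

/-- Classification of local fields of characteristic zero: a field `K` of characteristic
zero with a nontrivial multiplicative norm, locally compact in the induced topology, is
ring-isomorphic to exactly one of: `ℝ`, `ℂ`, or a finite extension of some `ℚ_p`. -/
theorem stmt_10 (K : Type) [NormedField K] [CharZero K]
    (hnontriv : ∃ x : K, ‖x‖ ≠ 0 ∧ ‖x‖ ≠ 1)
    (hlc : LocallyCompactSpace K) :
    (Nonempty (K ≃+* ℝ) ∧ ¬ Nonempty (K ≃+* ℂ) ∧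
      ¬ (∃ (p : ℕ) (hp : p.Prime),
          letI : Fact p.Prime := ⟨hp⟩
          ∃ ι : ℚ_[p] →+* K,
            letI : Algebra ℚ_[p] K := ι.toAlgebra
            FiniteDimensional ℚ_[p] K)) ∨
    (¬ Nonempty (K ≃+* ℝ) ∧ Nonempty (K ≃+* ℂ) ∧
      ¬ (∃ (p : ℕ) (hp : p.Prime),
          letI : Fact p.Prime := ⟨hp⟩
          ∃ ι : ℚ_[p] →+* K,
            letI : Algebra ℚ_[p] K := ι.toAlgebra
            FiniteDimensional ℚ_[p] K)) ∨
    (¬ Nonempty (K ≃+* ℝ) ∧ ¬ Nonempty (K ≃+* ℂ) ∧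
      (∃ (p : ℕ) (hp : p.Prime),
          letI : Fact p.Prime := ⟨hp⟩
          ∃ ι : ℚ_[p] →+* K,
            letI : Algebra ℚ_[p] K := ι.toAlgebra
            FiniteDimensional ℚ_[p] K)) := by
  let : NontriviallyNormedField K :=
    .ofNormNeOne (hnontriv.imp fun _ hx => ⟨norm_ne_zero_iff.mp hx.1, hx.2⟩)
  have : ProperSpace K := .of_nontriviallyNormedField_of_weaklyLocallyCompactSpace K
  have h_real_complex : ¬ (Nonempty (K ≃+* ℝ) ∧ Nonempty (K ≃+* ℂ)) := fun ⟨⟨e⟩, ⟨e'⟩⟩ =>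
    Complex.isEmpty_ringHom_real.false (e.toRingHom.comp e'.symm.toRingHom)
  have h_real_padic : Nonempty (K ≃+* ℝ) → ¬ IsPadicField K := by
    rintro ⟨e⟩ ⟨p, hp, ι, -⟩
    have := Fact.mk hp
    exact (Padic.isEmpty_ringHom_real p).false (e.toRingHom.comp ι)
  have h_complex_padic : Nonempty (K ≃+* ℂ) → ¬ IsPadicField K := by
    rintro ⟨e⟩ ⟨p, hp, ι, hfin⟩
    have := Fact.mk hp
    let := ι.toAlgebra
    have := IsAlgClosed.of_ringEquiv ℂ K e.symm
    exact Padic.not_finite_of_isAlgClosed p K hfin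
  have := nonempty_ringEquiv_real_or_complex_or_isPadicField K
  tauto
end
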